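/- For r ∈ (1, √3) define k(r) = √((1 + r²)(3 − r²))/(2r) (so k(r) ∈ (0,1)), and define A(r) = ((1 − r²)/(2r))·K(k(r)) + r·E(k(r)), where K and E are the complete elliptic integrals of the first and second kind. Then A is differentiable on (1, √3) with A′(r) = ((1 + r²)/(3 + r²))·E(k(r)) + ((r² − 1)/(3 − r²))·(K(k(r)) − E(k(r))); moreover A′(r) > 1/2 for all r ∈ (1, √3), and consequently A is strictly increasing on (1, √3). -/

import Mathlib

/-!
In the parameter `m = k²`, differentiating under the integral sign gives the classical formulas
`dE/dm = (E - K) / (2m)` and `dK/dm = (E - (1 - m) K) / (2m(1 - m))`; the second needs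
`∫ sin² x / Δ³`, which is read off from the exact derivative of `sin x cos x / Δ`,
`Δ = √(1 - m sin² x)`. With `m = k(r)² = (1 + r²)(3 - r²)/(4r²)` the chain rule gives `A'`.
Since `cos x ≤ Δ ≤ 1` we have `1 ≤ E ≤ K`, and `(1 + r²)/(3 + r²) > 1/2` gives `A' > 1/2`.
-/

open Real

/-- The complete elliptic integral of the first kind. -/
noncomputable def ellipticK (k : ℝ) : ℝ :=
  ∫ x in (0 : ℝ)..(π / 2), (Real.sqrt (1 - k ^ 2 * Real.sin x ^ 2))⁻¹

/-- The complete elliptic integral of the second kind. -/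
noncomputable def ellipticE (k : ℝ) : ℝ :=
  ∫ x in (0 : ℝ)..(π / 2), Real.sqrt (1 - k ^ 2 * Real.sin x ^ 2)

/-- The modulus `k(r) = √((1+r²)(3−r²))/(2r)`. -/
noncomputable def kmod (r : ℝ) : ℝ := Real.sqrt ((1 + r ^ 2) * (3 - r ^ 2)) / (2 * r)

/-- The (half-)area function `A(r)`. -/
noncomputable def Afun (r : ℝ) : ℝ :=
  ((1 - r ^ 2) / (2 * r)) * ellipticK (kmod r) + r * ellipticE (kmod r)

open MeasureTheory Set Topology

theorem hasDerivAt_intervalIntegral_of_continuousOn {F F' : ℝ → ℝ → ℝ} {U : Set ℝ}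
    {m₀ a b : ℝ} (hU : IsOpen U) (hm₀ : m₀ ∈ U) (hF : ∀ m ∈ U, Continuous (F m))
    (hF' : ContinuousOn (fun p : ℝ × ℝ => F' p.1 p.2) (U ×ˢ univ))
    (hderiv : ∀ m ∈ U, ∀ x, HasDerivAt (F · x) (F' m x) m) :
    HasDerivAt (fun m => ∫ x in a..b, F m x) (∫ x in a..b, F' m₀ x) m₀ := by
  obtain ⟨ε, hε, hball⟩ := Metric.nhds_basis_closedBall.mem_iff.1 (hU.mem_nhds hm₀)
  obtain ⟨M, hM⟩ := ((isCompact_closedBall m₀ ε).prod isCompact_uIcc).exists_bound_of_continuousOn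
    (hF'.mono (prod_mono hball (subset_univ (uIcc a b))))
  have hF'₀ : Continuous (F' m₀) :=
    hF'.comp_continuous (Continuous.prodMk_right m₀) fun x => ⟨hm₀, trivial⟩
  refine (intervalIntegral.hasDerivAt_integral_of_dominated_loc_of_deriv_le (bound := fun _ => M)
    (Metric.closedBall_mem_nhds m₀ hε) ?_ ((hF m₀ hm₀).intervalIntegrable a b)
    hF'₀.aestronglyMeasurable ?_ intervalIntegrable_const ?_).2
  · filter_upwards [hU.mem_nhds hm₀] with m hm
    exact (hF m hm).aestronglyMeasurable
  · exact ae_of_all _ fun x hx m hm => hM (m, x) ⟨hm, uIoc_subset_uIcc hx⟩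
  · exact ae_of_all _ fun x _ m hm => hderiv m (hball hm) x

noncomputable def ellipticDelta (m x : ℝ) : ℝ := √(1 - m * sin x ^ 2)

noncomputable def ellipticKParam (m : ℝ) : ℝ := ∫ x in (0 : ℝ)..(π / 2), (ellipticDelta m x)⁻¹

noncomputable def ellipticEParam (m : ℝ) : ℝ := ∫ x in (0 : ℝ)..(π / 2), ellipticDelta m x

theorem ellipticK_eq_ellipticKParam (k : ℝ) : ellipticK k = ellipticKParam (k ^ 2) := rfl

theorem ellipticE_eq_ellipticEParam (k : ℝ) : ellipticE k = ellipticEParam (k ^ 2) := rfl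

section Parameter

variable {m : ℝ}

theorem continuous_ellipticDelta : Continuous (Function.uncurry ellipticDelta) := by
  unfold Function.uncurry ellipticDelta; fun_prop

theorem continuous_ellipticDelta_param (m : ℝ) : Continuous (ellipticDelta m) :=
  continuous_ellipticDelta.comp (Continuous.prodMk_right m)

theorem one_sub_mul_sin_sq_pos (hm : m < 1) (x : ℝ) : 0 < 1 - m * sin x ^ 2 := by
  rcases le_or_gt m 0 with h | h
  · nlinarith [sq_nonneg (sin x)]
  · nlinarith [sin_sq_le_one x]

theorem ellipticDelta_pos (hm : m < 1) (x : ℝ) : 0 < ellipticDelta m x :=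
  sqrt_pos.2 (one_sub_mul_sin_sq_pos hm x)

theorem ellipticDelta_sq (hm : m ≤ 1) (x : ℝ) : ellipticDelta m x ^ 2 = 1 - m * sin x ^ 2 :=
  sq_sqrt (by nlinarith [sin_sq_le_one x, sq_nonneg (sin x)])

theorem ellipticDelta_le_one (hm : 0 ≤ m) (x : ℝ) : ellipticDelta m x ≤ 1 :=
  sqrt_le_one.2 (by nlinarith [sq_nonneg (sin x)])

theorem cos_le_ellipticDelta (hm : m ≤ 1) {x : ℝ} (hx : x ∈ Icc 0 (π / 2)) :
    cos x ≤ ellipticDelta m x := by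
  rw [← sqrt_sq (cos_nonneg_of_mem_Icc ⟨by linarith [hx.1, pi_pos], hx.2⟩), cos_sq']
  exact sqrt_le_sqrt (by nlinarith [sq_nonneg (sin x)])

theorem continuous_ellipticDelta_inv (hm : m < 1) : Continuous fun x => (ellipticDelta m x)⁻¹ :=
  (continuous_ellipticDelta_param m).inv₀ fun x => (ellipticDelta_pos hm x).ne'

theorem hasDerivAt_ellipticDelta_param (hm : m < 1) (x : ℝ) :
    HasDerivAt (fun m => ellipticDelta m x) (-(sin x ^ 2 / ellipticDelta m x) / 2) m := by
  have h := (((hasDerivAt_id m).mul_const (sin x ^ 2)).const_sub 1).sqrt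
    (one_sub_mul_sin_sq_pos hm x).ne'
  refine h.congr_deriv ?_
  simp only [ellipticDelta, id]
  ring

theorem hasDerivAt_ellipticDelta_inv_param (hm : m < 1) (x : ℝ) :
    HasDerivAt (fun m => (ellipticDelta m x)⁻¹) (sin x ^ 2 / ellipticDelta m x ^ 3 / 2) m := by
  have hΔ := (ellipticDelta_pos hm x).ne'
  refine ((hasDerivAt_ellipticDelta_param hm x).inv hΔ).congr_deriv ?_
  field_simp

theorem hasDerivAt_mul_sin_mul_cos_div_ellipticDelta (hm : m < 1) (x : ℝ) :
    HasDerivAt (fun x => m * (sin x * cos x / ellipticDelta m x))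
      (ellipticDelta m x - (1 - m) * (ellipticDelta m x)⁻¹
        - m * (1 - m) * (sin x ^ 2 / ellipticDelta m x ^ 3)) x := by
  have hΔ := ellipticDelta_pos hm x
  have hsq := ellipticDelta_sq hm.le x
  have hΔ' : HasDerivAt (ellipticDelta m)
      (-(m * (2 * sin x * cos x)) / (2 * ellipticDelta m x)) x :=
    (((hasDerivAt_sin x).pow 2).const_mul m |>.const_sub 1
      |>.sqrt (one_sub_mul_sin_sq_pos hm x).ne').congr_deriv (by simp [ellipticDelta])
  have h := (((hasDerivAt_sin x).fun_mul (hasDerivAt_cos x)).fun_div hΔ' hΔ.ne').const_mul m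
  refine h.congr_deriv ?_
  have hc : cos x ^ 2 = 1 - sin x ^ 2 := cos_sq' x
  field_simp
  linear_combination (m * ellipticDelta m x ^ 2 + m ^ 2 * sin x ^ 2) * hc
    + (-ellipticDelta m x ^ 2 - m * sin x ^ 2) * hsq

theorem continuousOn_sin_sq_div_ellipticDelta_pow (n : ℕ) :
    ContinuousOn (fun p : ℝ × ℝ => sin p.2 ^ 2 / ellipticDelta p.1 p.2 ^ n) (Iio 1 ×ˢ univ) :=
  (continuous_sin.comp continuous_snd).pow 2 |>.continuousOn.div
    (continuous_ellipticDelta.pow n).continuousOn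
    fun p hp => pow_ne_zero n (ellipticDelta_pos hp.1 p.2).ne'

theorem continuous_sin_sq_div_ellipticDelta_pow (hm : m < 1) (n : ℕ) :
    Continuous fun x => sin x ^ 2 / ellipticDelta m x ^ n :=
  (continuous_sin.pow 2).div ((continuous_ellipticDelta_param m).pow n)
    fun x => pow_ne_zero n (ellipticDelta_pos hm x).ne'

theorem mul_integral_sin_sq_div_ellipticDelta (hm : m < 1) :
    m * ∫ x in (0 : ℝ)..(π / 2), sin x ^ 2 / ellipticDelta m x
      = ellipticKParam m - ellipticEParam m := by
  rw [← intervalIntegral.integral_const_mul, ellipticKParam, ellipticEParam,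
    ← intervalIntegral.integral_sub ((continuous_ellipticDelta_inv hm).intervalIntegrable _ _)
    ((continuous_ellipticDelta_param m).intervalIntegrable _ _)]
  refine intervalIntegral.integral_congr fun x _ => ?_
  have hΔ := (ellipticDelta_pos hm x).ne'
  field_simp
  linear_combination ellipticDelta_sq hm.le x

theorem mul_one_sub_mul_integral_sin_sq_div_ellipticDelta_pow_three (hm : m < 1) :
    m * (1 - m) * ∫ x in (0 : ℝ)..(π / 2), sin x ^ 2 / ellipticDelta m x ^ 3
      = ellipticEParam m - (1 - m) * ellipticKParam m := by
  have i₁ := (continuous_ellipticDelta_param m).intervalIntegrable (μ := volume) 0 (π / 2)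
  have i₂ := ((continuous_ellipticDelta_inv hm).intervalIntegrable (μ := volume) 0
    (π / 2)).const_mul (1 - m)
  have i₃ := ((continuous_sin_sq_div_ellipticDelta_pow hm 3).intervalIntegrable (μ := volume) 0
    (π / 2)).const_mul (m * (1 - m))
  have h := intervalIntegral.integral_eq_sub_of_hasDerivAt
    (fun x _ => hasDerivAt_mul_sin_mul_cos_div_ellipticDelta hm x) ((i₁.sub i₂).sub i₃)
  rw [intervalIntegral.integral_sub (i₁.sub i₂) i₃, intervalIntegral.integral_sub i₁ i₂,
    intervalIntegral.integral_const_mul, intervalIntegral.integral_const_mul] at h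
  simp only [sin_zero, cos_pi_div_two, zero_mul, mul_zero, zero_div, sub_zero] at h
  rw [ellipticKParam, ellipticEParam]
  linarith

theorem hasDerivAt_ellipticKParam (hm : m < 1) (hm₀ : m ≠ 0) :
    HasDerivAt ellipticKParam
      ((ellipticEParam m - (1 - m) * ellipticKParam m) / (2 * m * (1 - m))) m := by
  have h := hasDerivAt_intervalIntegral_of_continuousOn (a := 0) (b := π / 2) isOpen_Iio hm
    (fun _ hm => continuous_ellipticDelta_inv hm)
    ((continuousOn_sin_sq_div_ellipticDelta_pow 3).div_const 2)
    (fun _ hm => hasDerivAt_ellipticDelta_inv_param hm)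
  refine h.congr_deriv ?_
  rw [intervalIntegral.integral_div,
    ← mul_one_sub_mul_integral_sin_sq_div_ellipticDelta_pow_three hm]
  have : 1 - m ≠ 0 := by linarith
  field_simp

theorem hasDerivAt_ellipticEParam (hm : m < 1) (hm₀ : m ≠ 0) :
    HasDerivAt ellipticEParam ((ellipticEParam m - ellipticKParam m) / (2 * m)) m := by
  have h := hasDerivAt_intervalIntegral_of_continuousOn (a := 0) (b := π / 2)
    (F' := fun m x => -(sin x ^ 2 / ellipticDelta m x) / 2) isOpen_Iio hm
    (fun m _ => continuous_ellipticDelta_param m)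
    (by simpa only [pow_one, Pi.neg_apply] using
      (continuousOn_sin_sq_div_ellipticDelta_pow 1).neg.div_const 2)
    (fun _ hm => hasDerivAt_ellipticDelta_param hm)
  refine h.congr_deriv ?_
  rw [intervalIntegral.integral_div, intervalIntegral.integral_neg, ← neg_sub,
    ← mul_integral_sin_sq_div_ellipticDelta hm]
  field_simp

theorem one_le_ellipticEParam (hm : m ≤ 1) : 1 ≤ ellipticEParam m :=
  calc (1 : ℝ) = ∫ x in (0 : ℝ)..(π / 2), cos x := by simp
    _ ≤ ellipticEParam m :=
      intervalIntegral.integral_mono_on (by positivity) (continuous_cos.intervalIntegrable _ _)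
        ((continuous_ellipticDelta_param m).intervalIntegrable _ _)
        fun _ hx => cos_le_ellipticDelta hm hx

theorem ellipticEParam_le_ellipticKParam (hm₀ : 0 ≤ m) (hm : m < 1) :
    ellipticEParam m ≤ ellipticKParam m := by
  refine intervalIntegral.integral_mono_on (by positivity)
    ((continuous_ellipticDelta_param m).intervalIntegrable _ _)
    ((continuous_ellipticDelta_inv hm).intervalIntegrable _ _) fun x _ => ?_
  have hΔ₁ := ellipticDelta_le_one hm₀ x
  exact hΔ₁.trans ((one_le_inv₀ (ellipticDelta_pos hm x)).2 hΔ₁)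

end Parameter

section Modulus

variable {r : ℝ}

theorem kmod_sq (hr : r ^ 2 ≤ 3) : kmod r ^ 2 = (1 + r ^ 2) * (3 - r ^ 2) / (4 * r ^ 2) := by
  rw [kmod, div_pow, sq_sqrt (by nlinarith)]
  ring

theorem kmod_mem_Ioo (hr : 1 < r) (hr₃ : r ^ 2 < 3) : kmod r ∈ Ioo 0 1 := by
  have hpos : 0 < kmod r := div_pos (sqrt_pos.2 (by nlinarith)) (by positivity)
  refine ⟨hpos, (sq_lt_one_iff₀ hpos.le).1 ?_⟩
  rw [kmod_sq hr₃.le, div_lt_one (by positivity)]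
  nlinarith [mul_pos (by nlinarith : (0 : ℝ) < r ^ 2 - 1) (by positivity : (0 : ℝ) < r ^ 2 + 3)]

theorem hasDerivAt_kmod_sq (hr : 0 < r) (hr₃ : r ^ 2 < 3) :
    HasDerivAt (fun r => kmod r ^ 2) (-(3 + r ^ 4) / (2 * r ^ 3)) r := by
  have hkmod : (fun r => kmod r ^ 2) =ᶠ[𝓝 r] fun r => (1 + r ^ 2) * (3 - r ^ 2) / (4 * r ^ 2) := by
    filter_upwards [(isOpen_lt (continuous_pow 2) continuous_const).mem_nhds hr₃] with s hs
    exact kmod_sq (le_of_lt hs)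
  refine HasDerivAt.congr_of_eventuallyEq ?_ hkmod
  have h := (((hasDerivAt_pow 2 r).const_add 1).fun_mul ((hasDerivAt_pow 2 r).const_sub 3)).fun_div
    ((hasDerivAt_pow 2 r).const_mul 4) (by positivity)
  refine h.congr_deriv ?_
  field_simp
  ring

end Modulus

noncomputable def AfunDeriv (r : ℝ) : ℝ :=
  ((1 + r ^ 2) / (3 + r ^ 2)) * ellipticE (kmod r) +
    ((r ^ 2 - 1) / (3 - r ^ 2)) * (ellipticK (kmod r) - ellipticE (kmod r))

section Area

variable {r : ℝ}

theorem hasDerivAt_Afun (hr : 1 < r) (hr₃ : r ^ 2 < 3) : HasDerivAt Afun (AfunDeriv r) r := by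
  obtain ⟨hk₀, hk₁⟩ := kmod_mem_Ioo hr hr₃
  have hm₀ : 0 < kmod r ^ 2 := by positivity
  have hm₁ : kmod r ^ 2 < 1 := (sq_lt_one_iff₀ hk₀.le).2 hk₁
  have hm := hasDerivAt_kmod_sq (by linarith) hr₃
  have hK := (hasDerivAt_ellipticKParam hm₁ hm₀.ne').comp r hm
  have hE := (hasDerivAt_ellipticEParam hm₁ hm₀.ne').comp r hm
  have ha : HasDerivAt (fun r : ℝ => (1 - r ^ 2) / (2 * r)) (-(1 + r ^ 2) / (2 * r ^ 2)) r := by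
    refine (((hasDerivAt_pow 2 r).const_sub 1).fun_div ((hasDerivAt_id r).const_mul 2)
      (by positivity)).congr_deriv ?_
    simp only [id]
    field_simp
    ring
  refine ((ha.fun_mul hK).fun_add ((hasDerivAt_id r).fun_mul hE)).congr_deriv ?_
  rw [AfunDeriv, ellipticK_eq_ellipticKParam, ellipticE_eq_ellipticEParam]
  simp only [Function.comp_apply, id]
  generalize ellipticKParam (kmod r ^ 2) = K
  generalize ellipticEParam (kmod r ^ 2) = E
  have : r ^ 2 - 1 ≠ 0 := by nlinarith
  have : 3 - r ^ 2 ≠ 0 := by linarith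
  have h₁ : 1 - (1 + r ^ 2) * (3 - r ^ 2) / (4 * r ^ 2)
      = (r ^ 2 - 1) * (r ^ 2 + 3) / (4 * r ^ 2) := by
    field_simp
    ring
  rw [kmod_sq hr₃.le, h₁]
  field_simp
  ring

theorem one_half_lt_AfunDeriv (hr : 1 < r) (hr₃ : r ^ 2 < 3) : 1 / 2 < AfunDeriv r := by
  obtain ⟨hk₀, hk₁⟩ := kmod_mem_Ioo hr hr₃
  have hm₁ : kmod r ^ 2 < 1 := (sq_lt_one_iff₀ hk₀.le).2 hk₁
  have hE : 1 ≤ ellipticE (kmod r) := one_le_ellipticEParam hm₁.le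
  have hEK : ellipticE (kmod r) ≤ ellipticK (kmod r) :=
    ellipticEParam_le_ellipticKParam (by positivity) hm₁
  have hc₁ : 1 / 2 < (1 + r ^ 2) / (3 + r ^ 2) := by
    rw [div_lt_div_iff₀ (by norm_num) (by positivity)]
    nlinarith
  have hc₂ : 0 ≤ (r ^ 2 - 1) / (3 - r ^ 2) := div_nonneg (by nlinarith) (by linarith)
  rw [AfunDeriv]
  nlinarith [mul_nonneg hc₂ (sub_nonneg.2 hEK)]

end Area

/-- derivative formula and monotonicity of `A` on `(1, √3)`. -/
theorem stmt_4 :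
    (∀ r ∈ Set.Ioo (1 : ℝ) (Real.sqrt 3), kmod r ∈ Set.Ioo (0 : ℝ) 1) ∧
    (∀ r ∈ Set.Ioo (1 : ℝ) (Real.sqrt 3),
      HasDerivAt Afun
        (((1 + r ^ 2) / (3 + r ^ 2)) * ellipticE (kmod r) +
          ((r ^ 2 - 1) / (3 - r ^ 2)) * (ellipticK (kmod r) - ellipticE (kmod r))) r) ∧
    (∀ r ∈ Set.Ioo (1 : ℝ) (Real.sqrt 3),
      ((1 + r ^ 2) / (3 + r ^ 2)) * ellipticE (kmod r) +
        ((r ^ 2 - 1) / (3 - r ^ 2)) * (ellipticK (kmod r) - ellipticE (kmod r)) > 1 / 2) ∧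
    StrictMonoOn Afun (Set.Ioo (1 : ℝ) (Real.sqrt 3)) := by
  have hsq : ∀ r ∈ Ioo (1 : ℝ) √3, 1 < r ∧ r ^ 2 < 3 := fun r hr =>
    ⟨hr.1, (lt_sqrt (by linarith [hr.1])).1 hr.2⟩
  have hderiv : ∀ r ∈ Ioo (1 : ℝ) √3, HasDerivAt Afun (AfunDeriv r) r :=
    fun r hr => hasDerivAt_Afun (hsq r hr).1 (hsq r hr).2
  refine ⟨fun r hr => kmod_mem_Ioo (hsq r hr).1 (hsq r hr).2, hderiv,
    fun r hr => one_half_lt_AfunDeriv (hsq r hr).1 (hsq r hr).2, ?_⟩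
  refine strictMonoOn_of_hasDerivWithinAt_pos (convex_Ioo 1 √3)
    (fun r hr => (hderiv r hr).continuousAt.continuousWithinAt)
    (fun r hr => (hderiv r (interior_subset hr)).hasDerivWithinAt) fun r hr => ?_
  rw [interior_Ioo] at hr
  linarith [one_half_lt_AfunDeriv (hsq r hr).1 (hsq r hr).2]
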